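/- Suppose the graph is connected, and let Ĉ = E_K C where E_K ∈ ℝ^{K×N} is any matrix (in the application, the 0–1 area-membership matrix whose k-th row is the indicator vector of area N_k). Suppose vectors P^in, d* ∈ ℝ^N, P* ∈ ℝ^E, φ* ∈ ℝ^N, P̂ ∈ ℝ^K satisfy: P^in − d* = C P*, P^in − d* = C B Cᵀ φ*, Ĉ B Cᵀ φ* = P̂, and P̲ ≤ B Cᵀ φ* ≤ P̄. Then Ĉ P* = P̂. If moreover P* = B Cᵀ θ for some θ ∈ ℝ^N, then P* = B Cᵀ φ*, and consequently P̲ ≤ P* ≤ P̄. -/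
import Mathlib


open Matrix BigOperators

/-- Incidence matrix of a directed graph whose edge `e` goes from `src e` to `tgt e`. -/
def inc {N E : Type*} [DecidableEq N] (src tgt : E → N) : Matrix N E ℝ :=
  Matrix.of fun i e => if src e = i then (1 : ℝ) else if tgt e = i then -1 else 0

/-- The vector of line flows `B Cᵀ φ`. -/
def BCt {N E : Type*} (src tgt : E → N) (B : E → ℝ) (φ : N → ℝ) : E → ℝ :=
  fun e => B e * (φ (src e) - φ (tgt e))

lemma dot_mulVec_inc {N E : Type*} [Fintype N] [Fintype E] [DecidableEq N]
    (src tgt : E → N) (hne : ∀ e, src e ≠ tgt e) (f : E → ℝ) (ψ : N → ℝ) :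
    ∑ i, ψ i * (inc src tgt).mulVec f i = ∑ e, f e * (ψ (src e) - ψ (tgt e)) := by
  simp only [Matrix.mulVec, dotProduct, inc, Matrix.of_apply, Finset.mul_sum]
  rw [Finset.sum_comm]
  refine Finset.sum_congr rfl fun e _ => ?_
  have : ∀ i : N, ψ i * ((if src e = i then (1:ℝ) else if tgt e = i then -1 else 0) * f e)
      = (if src e = i then ψ i * f e else 0) + (if tgt e = i then -(ψ i * f e) else 0) := by
    intro i
    by_cases h1 : src e = i
    · have h2 : tgt e ≠ i := fun h => hne e (h1.trans h.symm)
      simp [h1, h2]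
    · by_cases h2 : tgt e = i <;> simp [h1, h2]
  rw [Finset.sum_congr rfl fun i _ => this i, Finset.sum_add_distrib,
    Finset.sum_ite_eq, Finset.sum_ite_eq]
  simp; ring

/-- On a connected network with `Ĉ = E_K C`, if
`P^in − d* = C P* = C B Cᵀ φ*`, `Ĉ B Cᵀ φ* = P̂` and `P̲ ≤ B Cᵀ φ* ≤ P̄`, then
`Ĉ P* = P̂`; and if moreover `P* = B Cᵀ θ` for some `θ`, then `P* = B Cᵀ φ*` and hence
`P̲ ≤ P* ≤ P̄`. -/
theorem inter_area_and_thermal_limits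
    {N E K : Type*} [Fintype N] [Fintype E] [Fintype K] [DecidableEq N]
    (src tgt : E → N) (hne : ∀ e, src e ≠ tgt e)
    (hconn : ∀ ψ : N → ℝ, (∀ e, ψ (src e) = ψ (tgt e)) → ∀ i j, ψ i = ψ j)
    (B : E → ℝ) (hB : ∀ e, 0 < B e)
    (EK : Matrix K N ℝ) (Chat : Matrix K E ℝ) (hChat : Chat = EK * inc src tgt)
    (Pin dstar : N → ℝ) (Pstar : E → ℝ) (φstar : N → ℝ) (Phat : K → ℝ) (Plo Phi : E → ℝ)
    (h1 : ∀ i, Pin i - dstar i = (inc src tgt).mulVec Pstar i)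
    (h2 : ∀ i, Pin i - dstar i = (inc src tgt).mulVec (BCt src tgt B φstar) i)
    (h3 : ∀ k, Chat.mulVec (BCt src tgt B φstar) k = Phat k)
    (h4 : ∀ e, Plo e ≤ BCt src tgt B φstar e ∧ BCt src tgt B φstar e ≤ Phi e) :
    (∀ k, Chat.mulVec Pstar k = Phat k) ∧
    ∀ θ : N → ℝ, Pstar = BCt src tgt B θ →
      Pstar = BCt src tgt B φstar ∧ ∀ e, Plo e ≤ Pstar e ∧ Pstar e ≤ Phi e := by
  have hCP : (inc src tgt).mulVec Pstar = (inc src tgt).mulVec (BCt src tgt B φstar) := by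
    funext i; rw [← h1 i, h2 i]
  constructor
  · intro k
    rw [← h3 k, hChat, ← Matrix.mulVec_mulVec, ← Matrix.mulVec_mulVec, hCP]
  · intro θ hθ
    have key : Pstar = BCt src tgt B φstar := by
      set ψ : N → ℝ := fun i => θ i - φstar i with hψ
      have hdiff : ∀ e, BCt src tgt B θ e - BCt src tgt B φstar e = BCt src tgt B ψ e := by
        intro e; simp only [BCt, hψ]; ring
      have hzero : (inc src tgt).mulVec (BCt src tgt B ψ) = 0 := by
        funext i
        have : (inc src tgt).mulVec (BCt src tgt B ψ) i =
            (inc src tgt).mulVec (BCt src tgt B θ) i -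
            (inc src tgt).mulVec (BCt src tgt B φstar) i := by
          simp only [Matrix.mulVec, dotProduct, ← Finset.sum_sub_distrib]
          refine Finset.sum_congr rfl fun e _ => ?_
          rw [← mul_sub, hdiff]
        rw [Pi.zero_apply, this, ← hθ, hCP, sub_self]
      have hsum : ∑ e, B e * (ψ (src e) - ψ (tgt e)) ^ 2 = 0 := by
        have := dot_mulVec_inc src tgt hne (BCt src tgt B ψ) ψ
        rw [hzero] at this
        simp only [Pi.zero_apply, mul_zero, Finset.sum_const_zero] at this
        have h' := this.symm
        rw [← h']
        refine Finset.sum_congr rfl fun e _ => ?_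
        simp only [BCt]; ring
      have heach : ∀ e, ψ (src e) = ψ (tgt e) := by
        intro e
        have hnn : ∀ e ∈ Finset.univ, (0:ℝ) ≤ B e * (ψ (src e) - ψ (tgt e)) ^ 2 :=
          fun e _ => mul_nonneg (hB e).le (sq_nonneg _)
        have := (Finset.sum_eq_zero_iff_of_nonneg hnn).mp hsum e (Finset.mem_univ e)
        have h0 : (ψ (src e) - ψ (tgt e)) ^ 2 = 0 := by
          rcases mul_eq_zero.mp this with h | h
          · exact absurd h (hB e).ne'
          · exact h
        have := pow_eq_zero_iff (n := 2) (by norm_num) |>.mp h0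
        linarith [sub_eq_zero.mp this]
      have hconst := hconn ψ heach
      funext e
      rw [hθ]
      simp only [BCt, hψ]
      have hc : θ (src e) - φstar (src e) = θ (tgt e) - φstar (tgt e) := hconst (src e) (tgt e)
      have : θ (src e) - θ (tgt e) = φstar (src e) - φstar (tgt e) := by linarith
      rw [this]
    exact ⟨key, fun e => key ▸ h4 e⟩
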